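/- Let 𝔥 be a Euclidean space with spectral decomposition system (𝒳, S, γ, (Λ_a)_{a∈A}), and let D be an S-invariant subset of 𝒳 (i.e., s • x ∈ D for all x ∈ D and s ∈ S). Then: (i) the interior of γ⁻¹(D) equals γ⁻¹(interior of D); (ii) the closure of γ⁻¹(D) equals γ⁻¹(closure of D); (iii) γ⁻¹(D) is closed if and only if D is closed; (iv) γ⁻¹(D) is convex if and only if D is convex. -/

import Mathlib

open scoped InnerProductSpace

/-- A spectral decomposition system `(𝓧, S, γ, (Λ a)_{a ∈ A})` for a Euclidean space `𝓗`,
with spectral-induced ordering mapping `τ`. -/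
structure SpectralDecompositionSystem
    (𝓗 : Type*) (𝓧 : Type*) [NormedAddCommGroup 𝓗] [InnerProductSpace ℝ 𝓗]
    [NormedAddCommGroup 𝓧] [InnerProductSpace ℝ 𝓧]
    (S : Type*) [Group S] [MulAction S 𝓧]
    {A : Type*} (γ : 𝓗 → 𝓧) (Λ : A → 𝓧 →ₗ[ℝ] 𝓗) (τ : 𝓧 → 𝓧) : Prop where
  /-- `S` acts on `𝓧` by linear maps. -/
  smul_add_smul : ∀ (s : S) (c : ℝ) (x y : 𝓧), s • (c • x + y) = c • (s • x) + s • y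
  /-- `S` acts on `𝓧` by isometries. -/
  norm_smul : ∀ (s : S) (x : 𝓧), ‖s • x‖ = ‖x‖
  /-- Each `Λ a` is a (linear) isometry. -/
  norm_lambda : ∀ (a : A) (x : 𝓧), ‖Λ a x‖ = ‖x‖
  /-- `τ` is `S`-invariant. -/
  tau_smul : ∀ (s : S) (x : 𝓧), τ (s • x) = τ x
  /-- `τ x` belongs to the orbit `S • x`. -/
  tau_orbit : ∀ x : 𝓧, ∃ s : S, τ x = s • x
  /-- `γ ∘ Λ a = τ` for all `a ∈ A`. -/
  gamma_lambda : ∀ (a : A) (x : 𝓧), γ (Λ a x) = τ x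
  /-- Every element of `𝓗` admits a spectral decomposition. -/
  exists_decomp : ∀ Z : 𝓗, ∃ a : A, Z = Λ a (γ Z)
  /-- Von Neumann-type trace inequality. -/
  inner_le : ∀ Z W : 𝓗, ⟪Z, W⟫_ℝ ≤ ⟪γ Z, γ W⟫_ℝ

variable {𝓗 𝓧 : Type*} [NormedAddCommGroup 𝓗] [InnerProductSpace ℝ 𝓗]
  [FiniteDimensional ℝ 𝓗] [NormedAddCommGroup 𝓧] [InnerProductSpace ℝ 𝓧]
  [FiniteDimensional ℝ 𝓧] {S : Type*} [Group S] [MulAction S 𝓧]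
  {A : Type*} [Nonempty A]

/-! `γ` is 1-Lipschitz, every `Z` equals `Λ a (γ Z)` for some isometry `Λ a`, and
`Λ a ⁻¹' (γ ⁻¹' D) = τ ⁻¹' D = D` for `S`-invariant `D`. Interior, closure and closedness
therefore transfer along the continuous maps `γ` and `Λ a`, and so does convexity of `γ ⁻¹' D`
to `D`. Conversely, the trace inequality makes `X ↦ ⟪γ X, τ z⟫` convex, so no linear functional
separates `γ (a • Z + b • W)` from the orbit of `a • γ Z + b • γ W`. That orbit is a fibre of
the continuous map `τ`, hence compact, so `γ (a • Z + b • W)` lies in its convex hull, which is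
contained in any convex `S`-invariant `D` containing `γ Z` and `γ W`. -/

open Set

theorem IsCompact.isCompact_convexHull {E : Type*} [NormedAddCommGroup E] [NormedSpace ℝ E]
    [FiniteDimensional ℝ E] {K : Set E} (hK : IsCompact K) : IsCompact (convexHull ℝ K) := by
  rcases K.eq_empty_or_nonempty with rfl | ⟨k₀, hk₀⟩
  · simp
  set n := Module.finrank ℝ E + 1
  -- By Carathéodory, `n` points of `K` suffice for every point of the hull.
  suffices convexHull ℝ K =
      (fun p : (Fin n → ℝ) × (Fin n → E) ↦ ∑ j, p.1 j • p.2 j) ''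
        (stdSimplex ℝ (Fin n) ×ˢ univ.pi fun _ ↦ K) by
    rw [this]
    exact ((isCompact_stdSimplex ℝ _).prod (isCompact_univ_pi fun _ ↦ hK)).image (by fun_prop)
  refine subset_antisymm (fun x hx ↦ ?_) ?_
  · obtain ⟨ι, _, z, w, hzK, hz, hw₀, hw₁, rfl⟩ := eq_pos_convex_span_of_mem_convexHull hx
    obtain ⟨e⟩ : Nonempty (ι ↪ Fin n) := Function.Embedding.nonempty_of_card_le <| by
      simpa using hz.card_le_finrank_succ.trans (Nat.succ_le_succ (Submodule.finrank_le _))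
    refine ⟨(Function.extend e w 0, Function.extend e z fun _ ↦ k₀),
      ⟨⟨fun j ↦ ?_, ?_⟩, fun j _ ↦ ?_⟩, ?_⟩
    · by_cases hj : j ∈ range e
      · obtain ⟨i, rfl⟩ := hj
        simpa [e.injective.extend_apply] using (hw₀ i).le
      · simp [Function.extend_apply' _ _ _ hj]
    · rw [← hw₁]
      refine (Fintype.sum_of_injective e e.injective w (Function.extend e w 0)
        (fun j hj ↦ ?_) fun i ↦ ?_).symm
      · simp [Function.extend_apply' _ _ _ hj]
      · simp [e.injective.extend_apply]
    · by_cases hj : j ∈ range e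
      · obtain ⟨i, rfl⟩ := hj
        simpa [e.injective.extend_apply] using hzK (mem_range_self i)
      · simpa [Function.extend_apply' _ _ _ hj] using hk₀
    · refine (Fintype.sum_of_injective e e.injective _ _ (fun j hj ↦ ?_) fun i ↦ ?_).symm
      · simp [Function.extend_apply' _ _ _ hj]
      · simp [e.injective.extend_apply]
  · rintro _ ⟨⟨w, z⟩, ⟨hw, hz⟩, rfl⟩
    exact (convex_convexHull ℝ K).sum_mem (fun j _ ↦ hw.1 j) hw.2
      fun j _ ↦ subset_convexHull ℝ K (hz j (mem_univ j))

theorem mem_convexHull_of_forall_exists_inner_le {E : Type*} [NormedAddCommGroup E]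
    [InnerProductSpace ℝ E] [FiniteDimensional ℝ E] {K : Set E} (hK : IsCompact K) {p : E}
    (hp : ∀ z, ∃ k ∈ K, ⟪p, z⟫_ℝ ≤ ⟪k, z⟫_ℝ) : p ∈ convexHull ℝ K := by
  by_contra hpK
  obtain ⟨f, u, hf, hu⟩ :=
    geometric_hahn_banach_closed_point (convex_convexHull ℝ K) hK.isCompact_convexHull.isClosed hpK
  obtain ⟨k, hk, hpk⟩ := hp ((InnerProductSpace.toDual ℝ E).symm f)
  have := hf k (subset_convexHull ℝ K hk)
  rw [real_inner_comm, InnerProductSpace.toDual_symm_apply, real_inner_comm,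
    InnerProductSpace.toDual_symm_apply] at hpk
  linarith

namespace SpectralDecompositionSystem

variable {γ : 𝓗 → 𝓧} {Λ : A → 𝓧 →ₗ[ℝ] 𝓗} {τ : 𝓧 → 𝓧}
  (h : SpectralDecompositionSystem 𝓗 𝓧 S γ Λ τ)
include h

omit [FiniteDimensional ℝ 𝓗] [FiniteDimensional ℝ 𝓧] [Nonempty A]

theorem inner_smul_smul (s : S) (x y : 𝓧) : ⟪s • x, s • y⟫_ℝ = ⟪x, y⟫_ℝ := by
  have smul_add : s • (x + y) = s • x + s • y := by simpa using h.smul_add_smul s 1 x y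
  rw [real_inner_eq_norm_add_mul_self_sub_norm_mul_self_sub_norm_mul_self_div_two,
    real_inner_eq_norm_add_mul_self_sub_norm_mul_self_sub_norm_mul_self_div_two x y,
    ← smul_add, h.norm_smul, h.norm_smul, h.norm_smul]

def lambdaIsometry (a : A) : 𝓧 →ₗᵢ[ℝ] 𝓗 := ⟨Λ a, h.norm_lambda a⟩

theorem inner_lambda_lambda (a : A) (x y : 𝓧) : ⟪Λ a x, Λ a y⟫_ℝ = ⟪x, y⟫_ℝ :=
  (h.lambdaIsometry a).inner_map_map x y

theorem continuous_lambda (a : A) : Continuous (Λ a) :=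
  (h.lambdaIsometry a).continuous

theorem norm_gamma (X : 𝓗) : ‖γ X‖ = ‖X‖ := by
  obtain ⟨a, ha⟩ := h.exists_decomp X
  conv_rhs => rw [ha, h.norm_lambda]

theorem lipschitzWith_gamma : LipschitzWith 1 γ := by
  refine LipschitzWith.of_dist_le_mul fun X Y ↦ ?_
  rw [NNReal.coe_one, one_mul, dist_eq_norm, dist_eq_norm]
  have : ‖γ X - γ Y‖ ^ 2 ≤ ‖X - Y‖ ^ 2 := by
    rw [norm_sub_sq_real, norm_sub_sq_real, h.norm_gamma, h.norm_gamma]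
    linarith [h.inner_le X Y]
  exact (pow_le_pow_iff_left₀ (norm_nonneg _) (norm_nonneg _) two_ne_zero).mp this

theorem continuous_gamma : Continuous γ :=
  h.lipschitzWith_gamma.continuous

theorem tau_eq_gamma_comp (a : A) : τ = γ ∘ Λ a :=
  funext fun x ↦ (h.gamma_lambda a x).symm

theorem continuous_tau [Nonempty A] : Continuous τ := by
  rw [h.tau_eq_gamma_comp (Classical.arbitrary A)]
  exact h.continuous_gamma.comp (h.continuous_lambda _)

theorem tau_gamma (X : 𝓗) : τ (γ X) = γ X := by
  obtain ⟨a, ha⟩ := h.exists_decomp X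
  conv_rhs => rw [ha, h.gamma_lambda]

theorem tau_tau (x : 𝓧) : τ (τ x) = τ x := by
  obtain ⟨s, hs⟩ := h.tau_orbit x
  rw [hs, h.tau_smul, ← hs]

theorem inner_le_inner_tau [Nonempty A] (x y : 𝓧) : ⟪x, y⟫_ℝ ≤ ⟪τ x, τ y⟫_ℝ := by
  have a := Classical.arbitrary A
  simpa [h.inner_lambda_lambda, h.gamma_lambda] using h.inner_le (Λ a x) (Λ a y)

theorem exists_inner_tau_eq (x y : 𝓧) : ∃ s : S, ⟪τ x, τ y⟫_ℝ = ⟪s • x, y⟫_ℝ := by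
  obtain ⟨s, hs⟩ := h.tau_orbit x
  obtain ⟨t, ht⟩ := h.tau_orbit y
  refine ⟨t⁻¹ * s, ?_⟩
  rw [hs, ht, ← h.inner_smul_smul t⁻¹, inv_smul_smul, mul_smul]

theorem mem_orbit_iff_tau_eq {x y : 𝓧} : y ∈ MulAction.orbit S x ↔ τ y = τ x := by
  refine ⟨fun ⟨s, hs⟩ ↦ hs ▸ h.tau_smul s x, fun hxy ↦ ?_⟩
  obtain ⟨s, hs⟩ := h.tau_orbit x
  obtain ⟨t, ht⟩ := h.tau_orbit y
  exact ⟨t⁻¹ * s, show (t⁻¹ * s) • x = y by rw [mul_smul, ← hs, ← hxy, ht, inv_smul_smul]⟩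

theorem isCompact_orbit [FiniteDimensional ℝ 𝓧] [Nonempty A] (x : 𝓧) :
    IsCompact (MulAction.orbit S x) := by
  have hclosed : IsClosed (MulAction.orbit S x) := by
    rw [show MulAction.orbit S x = τ ⁻¹' {τ x} from ext fun _ ↦ h.mem_orbit_iff_tau_eq]
    exact isClosed_singleton.preimage h.continuous_tau
  refine Metric.isCompact_of_isClosed_isBounded hclosed
    ((Metric.isBounded_closedBall (x := 0) (r := ‖x‖)).subset ?_)
  rintro _ ⟨s, rfl⟩
  simp [h.norm_smul]

theorem convexOn_inner_gamma_tau (z : 𝓧) : ConvexOn ℝ univ fun X ↦ ⟪γ X, τ z⟫_ℝ := by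
  refine ⟨convex_univ, fun Z _ W _ a b ha hb _ ↦ ?_⟩
  obtain ⟨c, hc⟩ := h.exists_decomp (a • Z + b • W)
  -- `⟪γ X, τ z⟫` is the maximum over `c` of `⟪X, Λ c (τ z)⟫`, attained at a decomposition of `X`.
  have inner_le (X : 𝓗) : ⟪X, Λ c (τ z)⟫_ℝ ≤ ⟪γ X, τ z⟫_ℝ := by
    simpa [h.gamma_lambda, h.tau_tau] using h.inner_le X (Λ c (τ z))
  calc ⟪γ (a • Z + b • W), τ z⟫_ℝ = ⟪a • Z + b • W, Λ c (τ z)⟫_ℝ := by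
        conv_rhs => rw [hc, h.inner_lambda_lambda]
    _ = a * ⟪Z, Λ c (τ z)⟫_ℝ + b * ⟪W, Λ c (τ z)⟫_ℝ := by
        rw [inner_add_left, real_inner_smul_left, real_inner_smul_left]
    _ ≤ a * ⟪γ Z, τ z⟫_ℝ + b * ⟪γ W, τ z⟫_ℝ := by gcongr <;> exact inner_le _

theorem gamma_mem_convexHull_orbit [FiniteDimensional ℝ 𝓧] [Nonempty A] (Z W : 𝓗) {a b : ℝ}
    (ha : 0 ≤ a) (hb : 0 ≤ b) (hab : a + b = 1) :
    γ (a • Z + b • W) ∈ convexHull ℝ (MulAction.orbit S (a • γ Z + b • γ W)) := by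
  refine mem_convexHull_of_forall_exists_inner_le (h.isCompact_orbit _) fun z ↦ ?_
  set w := a • γ Z + b • γ W
  obtain ⟨s, hs⟩ := h.exists_inner_tau_eq w z
  refine ⟨s • w, MulAction.mem_orbit w s, ?_⟩
  calc ⟪γ (a • Z + b • W), z⟫_ℝ ≤ ⟪τ (γ (a • Z + b • W)), τ z⟫_ℝ := h.inner_le_inner_tau _ _
    _ = ⟪γ (a • Z + b • W), τ z⟫_ℝ := by rw [h.tau_gamma]
    _ ≤ a * ⟪γ Z, τ z⟫_ℝ + b * ⟪γ W, τ z⟫_ℝ :=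
        (h.convexOn_inner_gamma_tau z).2 (mem_univ Z) (mem_univ W) ha hb hab
    _ = ⟪w, τ z⟫_ℝ := by rw [inner_add_left, real_inner_smul_left, real_inner_smul_left]
    _ ≤ ⟪τ w, τ (τ z)⟫_ℝ := h.inner_le_inner_tau _ _
    _ = ⟪s • w, z⟫_ℝ := by rw [h.tau_tau, hs]

section InvariantSet

variable {D : Set 𝓧} (hD : ∀ x ∈ D, ∀ s : S, s • x ∈ D)
include hD

theorem preimage_tau : τ ⁻¹' D = D := by
  ext x
  obtain ⟨s, hs⟩ := h.tau_orbit x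
  refine ⟨fun hx ↦ ?_, fun hx ↦ by rw [mem_preimage, hs]; exact hD x hx s⟩
  simpa [mem_preimage, hs] using hD _ hx s⁻¹

theorem preimage_lambda_preimage_gamma (a : A) : Λ a ⁻¹' (γ ⁻¹' D) = D := by
  rw [← preimage_comp, ← h.tau_eq_gamma_comp, h.preimage_tau hD]

theorem interior_preimage_gamma : interior (γ ⁻¹' D) = γ ⁻¹' interior D := by
  refine subset_antisymm (fun Z hZ ↦ ?_)
    (preimage_interior_subset_interior_preimage h.continuous_gamma)
  obtain ⟨a, ha⟩ := h.exists_decomp Z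
  refine interior_maximal ?_ (isOpen_interior.preimage (h.continuous_lambda a))
    (ha ▸ hZ : Λ a (γ Z) ∈ _)
  exact (preimage_mono interior_subset).trans (h.preimage_lambda_preimage_gamma hD a).subset

theorem closure_preimage_gamma : closure (γ ⁻¹' D) = γ ⁻¹' closure D := by
  refine subset_antisymm (h.continuous_gamma.closure_preimage_subset D) fun Z hZ ↦ ?_
  obtain ⟨a, ha⟩ := h.exists_decomp Z
  have hD' : Λ a '' D ⊆ γ ⁻¹' D :=
    image_subset_iff.2 (h.preimage_lambda_preimage_gamma hD a).symm.subset
  rw [ha]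
  exact closure_mono hD' (image_closure_subset_closure_image (h.continuous_lambda a) ⟨_, hZ, rfl⟩)

theorem isClosed_preimage_gamma_iff [Nonempty A] : IsClosed (γ ⁻¹' D) ↔ IsClosed D := by
  refine ⟨fun hclosed ↦ ?_, fun hclosed ↦ hclosed.preimage h.continuous_gamma⟩
  rw [← h.preimage_lambda_preimage_gamma hD (Classical.arbitrary A)]
  exact hclosed.preimage (h.continuous_lambda _)

theorem convex_preimage_gamma_iff [FiniteDimensional ℝ 𝓧] [Nonempty A] :
    Convex ℝ (γ ⁻¹' D) ↔ Convex ℝ D := by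
  refine ⟨fun hconvex ↦ ?_, fun hconvex Z hZ W hW a b ha hb hab ↦ ?_⟩
  · rw [← h.preimage_lambda_preimage_gamma hD (Classical.arbitrary A)]
    exact hconvex.linear_preimage _
  · have horbit : MulAction.orbit S (a • γ Z + b • γ W) ⊆ D := by
      rintro _ ⟨s, rfl⟩
      exact hD _ (hconvex hZ hW ha hb hab) s
    exact convexHull_min horbit hconvex (h.gamma_mem_convexHull_orbit Z W ha hb hab)

end InvariantSet

end SpectralDecompositionSystem

theorem spectral_set_topological_properties
    (γ : 𝓗 → 𝓧) (Λ : A → 𝓧 →ₗ[ℝ] 𝓗) (τ : 𝓧 → 𝓧)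
    (hsys : SpectralDecompositionSystem 𝓗 𝓧 S γ Λ τ)
    (D : Set 𝓧) (hD : ∀ x ∈ D, ∀ s : S, s • x ∈ D) :
    interior (γ ⁻¹' D) = γ ⁻¹' interior D ∧
    closure (γ ⁻¹' D) = γ ⁻¹' closure D ∧
    (IsClosed (γ ⁻¹' D) ↔ IsClosed D) ∧
    (Convex ℝ (γ ⁻¹' D) ↔ Convex ℝ D) :=
  ⟨hsys.interior_preimage_gamma hD, hsys.closure_preimage_gamma hD,
    hsys.isClosed_preimage_gamma_iff hD, hsys.convex_preimage_gamma_iff hD⟩
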